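/- Let n₁, n₂, H be positive integers and l, u ∈ ℝ^{n₁} with 0 ≤ l_i ≤ u_i for all i. Let W ∈ ℝ^{n₁×n₂} satisfy W_{ij} ≥ 0 for all i, j and l_i ≤ Σ_{j=1}^{n₂} W_{ij} ≤ u_i for each i, and suppose there exist z ∈ {0,1}^{n₂×H} and α ∈ ℝ^{n₁×n₂×H} such that for all i, j, h: (a) W_{ij} = (2^H / (2^H − 1)) Σ_{h=1}^{H} 2^{−h} α_{ijh}; (b) l_i z_{jh} ≤ α_{ijh} ≤ u_i z_{jh}; (c) u_i z_{jh} + Σ_{j'=1}^{n₂} W_{ij'} − u_i ≤ α_{ijh} ≤ l_i z_{jh} + Σ_{j'=1}^{n₂} W_{ij'} − l_i. Then rank(W) ≤ 1, and hence W belongs to U^row(l,u) = { W ∈ ℝ^{n₁×n₂} : W ≥ 0 entrywise; l_i ≤ Σ_j W_{ij} ≤ u_i for each i; rank(W) ≤ 1 }. -/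

import Mathlib

/-!
For a binary `z`, the McCormick envelopes of the product `α = r z` of a row sum `r` with `z`
are tight: `z = 0` pins `α` to `0` through the bounds `l z ≤ α ≤ u z`, and `z = 1` pins it to
`r` through `u z + r - u ≤ α ≤ l z + r - l`. Substituting `α_{ijh} = r_i z_{jh}` into the
discretization gives `W_{ij} = r_i t_j`, an outer product, hence of rank at most one.
-/

theorem eq_mul_of_mcCormick_of_binary {R : Type*} [Ring R] [PartialOrder R]
    {l u r z a : R} (hz : z = 0 ∨ z = 1) (hlu : l * z ≤ a ∧ a ≤ u * z)
    (hr : u * z + r - u ≤ a ∧ a ≤ l * z + r - l) : a = r * z := by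
  rcases hz with rfl | rfl
  · simp only [mul_zero] at hlu ⊢
    exact le_antisymm hlu.2 hlu.1
  · simp only [mul_one, add_sub_cancel_left] at hr ⊢
    exact le_antisymm hr.2 hr.1

theorem Matrix.rank_le_one_of_apply_eq_mul_sum {m n ι R : Type*} [Fintype n] [Fintype ι]
    [CommRing R] [StrongRankCondition R] {W : Matrix m n R} (c : R) (w : ι → R) (r : m → R)
    (z : n → ι → R) (hW : ∀ i j, W i j = c * ∑ h, w h * (r i * z j h)) : W.rank ≤ 1 := by
  have hW' : W = vecMulVec r fun j => c * ∑ h, w h * z j h := by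
    ext i j
    simp only [hW, vecMulVec_apply, Finset.mul_sum]
    exact Finset.sum_congr rfl fun _ _ => by ring
  exact hW' ▸ rank_vecMulVec_le _ _

-- `h : Fin H` encodes the index `h + 1 ∈ {1, …, H}`.
theorem statement19_general (n₁ n₂ H : ℕ)
    (l u : Fin n₁ → ℝ)
    (W : Matrix (Fin n₁) (Fin n₂) ℝ)
    (hWpos : ∀ i j, 0 ≤ W i j)
    (hWrow : ∀ i, l i ≤ ∑ j, W i j ∧ ∑ j, W i j ≤ u i)
    (z : Fin n₂ → Fin H → ℝ) (α : Fin n₁ → Fin n₂ → Fin H → ℝ)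
    (hz : ∀ j h, z j h = 0 ∨ z j h = 1)
    (ha : ∀ i j, W i j =
      (2 : ℝ) ^ H / ((2 : ℝ) ^ H - 1) * ∑ h, (2 : ℝ)⁻¹ ^ (h.val + 1) * α i j h)
    (hb : ∀ i j h, l i * z j h ≤ α i j h ∧ α i j h ≤ u i * z j h)
    (hc : ∀ i j h,
      u i * z j h + (∑ j', W i j') - u i ≤ α i j h ∧
      α i j h ≤ l i * z j h + (∑ j', W i j') - l i) :
    W.rank ≤ 1 ∧
    W ∈ {W : Matrix (Fin n₁) (Fin n₂) ℝ |
      (∀ i j, 0 ≤ W i j) ∧ (∀ i, l i ≤ ∑ j, W i j ∧ ∑ j, W i j ≤ u i) ∧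
      W.rank ≤ 1} := by
  have hα : ∀ i j h, α i j h = (∑ j', W i j') * z j h := fun i j h =>
    eq_mul_of_mcCormick_of_binary (hz j h) (hb i j h) (hc i j h)
  have hrank : W.rank ≤ 1 :=
    Matrix.rank_le_one_of_apply_eq_mul_sum ((2 : ℝ) ^ H / ((2 : ℝ) ^ H - 1))
      (fun h : Fin H => (2 : ℝ)⁻¹ ^ (h.val + 1)) (fun i => ∑ j', W i j') z fun i j => by
        simp only [ha i j, hα]
  exact ⟨hrank, hWpos, hWrow, hrank⟩

/-- Containment D̲^row(l,u,H) ⊆ U^row(l,u): an entrywise nonnegative matrix with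
row sums in [lᵢ, uᵢ] satisfying the binary inner-discretization constraints with
McCormick envelopes has rank at most one, hence belongs to U^row(l,u).
Here h : Fin H encodes the index h+1 ∈ {1,…,H}. -/
theorem statement19 (n₁ n₂ H : ℕ) (hn₁ : 0 < n₁) (hn₂ : 0 < n₂) (hH : 0 < H)
    (l u : Fin n₁ → ℝ) (hl : ∀ i, 0 ≤ l i) (hlu : ∀ i, l i ≤ u i)
    (W : Matrix (Fin n₁) (Fin n₂) ℝ)
    (hWpos : ∀ i j, 0 ≤ W i j)
    (hWrow : ∀ i, l i ≤ ∑ j, W i j ∧ ∑ j, W i j ≤ u i)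
    (z : Fin n₂ → Fin H → ℝ) (α : Fin n₁ → Fin n₂ → Fin H → ℝ)
    (hz : ∀ j h, z j h = 0 ∨ z j h = 1)
    (ha : ∀ i j, W i j =
      (2 : ℝ) ^ H / ((2 : ℝ) ^ H - 1) * ∑ h, (2 : ℝ)⁻¹ ^ (h.val + 1) * α i j h)
    (hb : ∀ i j h, l i * z j h ≤ α i j h ∧ α i j h ≤ u i * z j h)
    (hc : ∀ i j h,
      u i * z j h + (∑ j', W i j') - u i ≤ α i j h ∧
      α i j h ≤ l i * z j h + (∑ j', W i j') - l i) :
    W.rank ≤ 1 ∧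
    W ∈ {W : Matrix (Fin n₁) (Fin n₂) ℝ |
      (∀ i j, 0 ≤ W i j) ∧ (∀ i, l i ≤ ∑ j, W i j ∧ ∑ j, W i j ≤ u i) ∧
      W.rank ≤ 1} :=
  statement19_general n₁ n₂ H l u W hWpos hWrow z α hz ha hb hc
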